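/- arXiv:2405.14711 — 4 statements merged into one kernel-verified Lean document; each statement's English description precedes it below -/
import Mathlib

section
/- For the univariate zero-inflated Poisson-lognormal model with parameters (μ, σ², π) ∈ ℝ × (0,∞) × (0,1), the parameter e^{σ²} is recovered from the moments of Y by e^{σ²} = (E[Y³] - 3E[Y²] + 2E[Y]) · E[Y] / (E[Y²] - E[Y])². -/
/-- Identifiability of `e^{σ²}` in the univariate zero-inflated Poisson-lognormal model:
with parameters `(μ, σ², π) ∈ ℝ × (0,∞) × (0,1)`, `A = exp(μ + σ²/2)`, and the moments
`E[Y] = (1-π)A`, `E[Y²] = (1-π)A(1 + A e^{σ²})`,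
`E[Y³] = (1-π)A(1 + 3A e^{σ²} + A² e^{3σ²})`, one recovers
`e^{σ²} = (E[Y³] - 3E[Y²] + 2E[Y]) · E[Y] / (E[Y²] - E[Y])²`. -/
theorem zipln_recover_exp_sigma_sq (μ σ2 π m1 m2 m3 A : ℝ)
    (hσ2 : 0 < σ2) (hπ : π ∈ Set.Ioo (0:ℝ) 1)
    (hA : A = Real.exp (μ + σ2 / 2))
    (h1 : m1 = (1 - π) * A)
    (h2 : m2 = (1 - π) * A * (1 + A * Real.exp σ2))
    (h3 : m3 = (1 - π) * A * (1 + 3 * A * Real.exp σ2 + A ^ 2 * Real.exp (3 * σ2))) :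
    Real.exp σ2 = (m3 - 3 * m2 + 2 * m1) * m1 / (m2 - m1) ^ 2 := by
  have hπ1 : (1 - π) ≠ 0 := by have := hπ.2; linarith
  have hAne : A ≠ 0 := hA ▸ (Real.exp_pos _).ne'
  have hEne : Real.exp σ2 ≠ 0 := (Real.exp_pos _).ne'
  have h3e : Real.exp (3 * σ2) = (Real.exp σ2) ^ 3 := by
    rw [show (3:ℝ) * σ2 = σ2 * 3 by ring, ← Real.exp_nat_mul]
    norm_num [mul_comm]
  subst h1 h2 h3
  rw [h3e]
  have hden : ((1 - π) * A * (1 + A * Real.exp σ2) - (1 - π) * A) ^ 2 ≠ 0 := by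
    have : (1 - π) * A * (1 + A * Real.exp σ2) - (1 - π) * A
        = (1 - π) * A ^ 2 * Real.exp σ2 := by ring
    rw [this]
    positivity
  field_simp
  ring
end

section
/- For the univariate zero-inflated Poisson-lognormal model, the zero-inflation probability satisfies π = 1 - E[Y]³ (E[Y³] - 3E[Y²] + 2E[Y]) / (E[Y²] - E[Y])³. -/
/-- Identifiability of the zero-inflation probability `π` in the univariate
zero-inflated Poisson-lognormal model: with `A = exp(μ + σ²/2)` and the moments
`E[Y] = (1-π)A`, `E[Y²] = (1-π)A(1 + A e^{σ²})`,
`E[Y³] = (1-π)A(1 + 3A e^{σ²} + A² e^{3σ²})`, one recovers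
`π = 1 - E[Y]³ (E[Y³] - 3E[Y²] + 2E[Y]) / (E[Y²] - E[Y])³`. -/
theorem zipln_recover_pi (μ σ2 π m1 m2 m3 A : ℝ)
    (hσ2 : 0 < σ2) (hπ : π ∈ Set.Ioo (0:ℝ) 1)
    (hA : A = Real.exp (μ + σ2 / 2))
    (h1 : m1 = (1 - π) * A)
    (h2 : m2 = (1 - π) * A * (1 + A * Real.exp σ2))
    (h3 : m3 = (1 - π) * A * (1 + 3 * A * Real.exp σ2 + A ^ 2 * Real.exp (3 * σ2))) :
    π = 1 - m1 ^ 3 * (m3 - 3 * m2 + 2 * m1) / (m2 - m1) ^ 3 := by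
  obtain ⟨h0, h1'⟩ := hπ
  have hA0 : A ≠ 0 := by rw [hA]; positivity
  have hπ1 : (1 : ℝ) - π ≠ 0 := by linarith
  have he : Real.exp σ2 ≠ 0 := Real.exp_ne_zero _
  have he3 : Real.exp (3 * σ2) = Real.exp σ2 ^ 3 := by
    rw [← Real.exp_nat_mul]; norm_num [mul_comm]
  have hd : m2 - m1 = (1 - π) * A ^ 2 * Real.exp σ2 := by
    rw [h1, h2]; ring
  have hn : m3 - 3 * m2 + 2 * m1 = (1 - π) * A ^ 3 * Real.exp σ2 ^ 3 := by
    rw [h1, h2, h3, he3]; ring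
  rw [hd, hn, h1]
  field_simp
  ring
end

section
/- The univariate zero-inflated Poisson-lognormal model with parameter θ = (μ, σ², π) ∈ ℝ × (0,∞) × (0,1) is identifiable: if two parameter values give the same distribution of Y, then they are equal. -/
open ProbabilityTheory MeasureTheory
open scoped NNReal

/-- The pmf of the univariate zero-inflated Poisson-lognormal distribution:
`Z ~ N(μ, v)`, `W ~ Bernoulli(π)` independent of `Z`, and
`Y | W, Z ~ W·δ₀ + (1-W)·Poisson(e^Z)`. -/
noncomputable def ziplnPMF (μ : ℝ) (v : ℝ≥0) (p : ℝ) (k : ℕ) : ℝ :=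
  p * (if k = 0 then 1 else 0) +
    (1 - p) * ∫ z, poissonPMFReal (Real.exp z).toNNReal k ∂(gaussianReal μ v)

/-! The `k`-th factorial moment `E[Y (Y - 1) ⋯ (Y - k + 1)]` of a Poisson variable with a random
intensity `Λ` is `E[Λ ^ k]`. For `k ≥ 1` it only involves `P(Y = n)` with `n ≥ 1`, where zero
inflation just scales the pmf by `1 - π`. So the pmf of `Y` determines
`(1 - π) E[e^{kZ}] = (1 - π) exp (k μ + k² σ² / 2)` for every `k ≥ 1`, and the logarithms of these
at `k = 1, 2, 3` determine `log (1 - π)`, `μ` and `σ²`. -/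

set_option linter.deprecated false

open scoped Nat
open Real

namespace ProbabilityTheory

lemma descFactorial_mul_poissonPMFReal (r : ℝ≥0) (k j : ℕ) :
    ((k + j).descFactorial k : ℝ) * poissonPMFReal r (k + j)
      = exp (-r) * r ^ k * (r ^ j / j !) := by
  have hfact : (j ! : ℝ) * (k + j).descFactorial k = (k + j)! := by
    exact_mod_cast (Nat.add_sub_cancel_left (n := k) (m := j)) ▸
      Nat.factorial_mul_descFactorial (Nat.le_add_right k j)
  have hj : (j ! : ℝ) ≠ 0 := by positivity
  rw [poissonPMFReal, ← hfact, pow_add]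
  field_simp

lemma hasSum_descFactorial_mul_poissonPMFReal (r : ℝ≥0) (k : ℕ) :
    HasSum (fun j ↦ ((k + j).descFactorial k : ℝ) * poissonPMFReal r (k + j)) ((r : ℝ) ^ k) := by
  have hexp : HasSum (fun j : ℕ ↦ (r : ℝ) ^ j / j !) (exp r) := by
    simpa only [← Real.exp_eq_exp_ℝ] using NormedSpace.expSeries_div_hasSum_exp (r : ℝ)
  have h := hexp.mul_left (exp (-r) * r ^ k)
  rw [mul_right_comm, ← exp_add, neg_add_cancel, exp_zero, one_mul] at h
  simpa only [descFactorial_mul_poissonPMFReal] using h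

lemma hasSum_descFactorial_mul_integral_poissonPMFReal {Ω : Type*} [MeasurableSpace Ω]
    {ν : Measure Ω} {Λ : Ω → ℝ≥0} (hΛ : Measurable Λ) {k : ℕ}
    (hint : Integrable (fun ω ↦ (Λ ω : ℝ) ^ k) ν) :
    HasSum (fun j ↦ ((k + j).descFactorial k : ℝ) * ∫ ω, poissonPMFReal (Λ ω) (k + j) ∂ν)
      (∫ ω, (Λ ω : ℝ) ^ k ∂ν) := by
  simp_rw [← integral_const_mul]
  have hmeas (j : ℕ) :
      Measurable fun ω ↦ ((k + j).descFactorial k : ℝ) * poissonPMFReal (Λ ω) (k + j) := by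
    simp only [poissonPMFReal]
    fun_prop
  have hsum (ω : Ω) := hasSum_descFactorial_mul_poissonPMFReal (Λ ω) k
  -- The terms are nonnegative, so they dominate themselves.
  refine hasSum_integral_of_dominated_convergence
    (fun j ω ↦ ((k + j).descFactorial k : ℝ) * poissonPMFReal (Λ ω) (k + j))
    (fun j ↦ (hmeas j).aestronglyMeasurable) (fun j ↦ ae_of_all _ fun ω ↦ ?_)
    (ae_of_all _ fun ω ↦ (hsum ω).summable) ?_ (ae_of_all _ hsum)
  · exact (Real.norm_of_nonneg (by positivity [poissonPMFReal_nonneg (r := Λ ω) (n := k + j)])).le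
  · simpa only [fun ω ↦ (hsum ω).tsum_eq] using hint

end ProbabilityTheory

open ProbabilityTheory

lemma hasSum_descFactorial_mul_ziplnPMF (μ : ℝ) (v : ℝ≥0) (p : ℝ) {k : ℕ} (hk : k ≠ 0) :
    HasSum (fun j ↦ ((k + j).descFactorial k : ℝ) * ziplnPMF μ v p (k + j))
      ((1 - p) * exp (μ * k + v * k ^ 2 / 2)) := by
  have hexp (z : ℝ) : ((exp z).toNNReal : ℝ) ^ k = exp (k * z) := by
    rw [Real.coe_toNNReal _ (exp_nonneg z), ← exp_nat_mul]
  have hmix := hasSum_descFactorial_mul_integral_poissonPMFReal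
    (ν := gaussianReal μ v) (by fun_prop : Measurable fun z ↦ (exp z).toNNReal) (k := k)
    (by simpa only [hexp] using integrable_exp_mul_gaussianReal (k : ℝ))
  have hmgf : ∫ z, exp (k * z) ∂gaussianReal μ v = exp (μ * k + v * k ^ 2 / 2) :=
    congrFun mgf_fun_id_gaussianReal (k : ℝ)
  have hterm (j : ℕ) : ((k + j).descFactorial k : ℝ) * ziplnPMF μ v p (k + j) =
      (1 - p) * (((k + j).descFactorial k : ℝ) *
        ∫ z, poissonPMFReal (exp z).toNNReal (k + j) ∂gaussianReal μ v) := by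
    simp only [ziplnPMF, Nat.add_eq_zero_iff, hk, false_and, if_false]
    ring
  simp only [hexp, hmgf] at hmix
  simpa only [hterm] using hmix.mul_left (1 - p)

theorem zipln_identifiable_general (μ₁ μ₂ : ℝ) (v₁ v₂ : ℝ≥0) (p₁ p₂ : ℝ)
    (hp₁ : p₁ ∈ Set.Ioo (0:ℝ) 1) (hp₂ : p₂ ∈ Set.Ioo (0:ℝ) 1)
    (h : ∀ k : ℕ, ziplnPMF μ₁ v₁ p₁ k = ziplnPMF μ₂ v₂ p₂ k) :
    μ₁ = μ₂ ∧ v₁ = v₂ ∧ p₁ = p₂ := by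
  have hc₁ : 0 < 1 - p₁ := sub_pos.2 hp₁.2
  have hc₂ : 0 < 1 - p₂ := sub_pos.2 hp₂.2
  have hcgf (k : ℕ) (hk : k ≠ 0) :
      log (1 - p₁) + μ₁ * k + v₁ * k ^ 2 / 2 = log (1 - p₂) + μ₂ * k + v₂ * k ^ 2 / 2 := by
    have hmgf := (hasSum_descFactorial_mul_ziplnPMF μ₁ v₁ p₁ hk).unique
      (by simpa only [h] using hasSum_descFactorial_mul_ziplnPMF μ₂ v₂ p₂ hk)
    have hlog := congrArg log hmgf
    rw [log_mul hc₁.ne' (exp_pos _).ne', log_mul hc₂.ne' (exp_pos _).ne', log_exp, log_exp] at hlog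
    linarith
  have h1 := hcgf 1 one_ne_zero
  have h2 := hcgf 2 two_ne_zero
  have h3 := hcgf 3 three_ne_zero
  push_cast at h1 h2 h3
  have hv : (v₁ : ℝ) = v₂ := by linarith
  have hlog : log (1 - p₁) = log (1 - p₂) := by linarith
  refine ⟨by linarith, NNReal.coe_injective hv, ?_⟩
  linarith [log_injOn_pos hc₁ hc₂ hlog]

/-- Identifiability of the univariate zero-inflated Poisson-lognormal model with
parameter `θ = (μ, σ², π) ∈ ℝ × (0,∞) × (0,1)`: if two parameter values give the
same distribution of `Y`, then they are equal. -/
theorem zipln_identifiable (μ₁ μ₂ : ℝ) (v₁ v₂ : ℝ≥0) (p₁ p₂ : ℝ)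
    (hv₁ : 0 < v₁) (hv₂ : 0 < v₂)
    (hp₁ : p₁ ∈ Set.Ioo (0:ℝ) 1) (hp₂ : p₂ ∈ Set.Ioo (0:ℝ) 1)
    (h : ∀ k : ℕ, ziplnPMF μ₁ v₁ p₁ k = ziplnPMF μ₂ v₂ p₂ k) :
    μ₁ = μ₂ ∧ v₁ = v₂ ∧ p₁ = p₂ :=
  zipln_identifiable_general μ₁ μ₂ v₁ v₂ p₁ p₂ hp₁ hp₂ h
end

section
/- In the bivariate zero-inflated Poisson-lognormal model, Cov(Y_j, Y_k) = (1-π_j)(1-π_k) A_j A_k (e^{σ_{jk}} - 1) for j ≠ k, where A_j = exp(μ_j + σ_{jj}/2). -/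
open ProbabilityTheory MeasureTheory
open scoped NNReal

/-- The bivariate Gaussian measure on `ℝ × ℝ` with means `μj, μk`, variances
`σjj, σkk` and covariance `σjk`, constructed via the Cholesky factorization from two
independent standard normals (requires `σjj > 0` and `σkk - σjk²/σjj ≥ 0`). -/
noncomputable def bivariateGaussian (μj μk σjj σkk σjk : ℝ) : Measure (ℝ × ℝ) :=
  Measure.map
    (fun uv : ℝ × ℝ =>
      (μj + Real.sqrt σjj * uv.1,
       μk + σjk / Real.sqrt σjj * uv.1 + Real.sqrt (σkk - σjk ^ 2 / σjj) * uv.2))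
    ((gaussianReal 0 1).prod (gaussianReal 0 1))

/-- The joint pmf of `(Y_j, Y_k)` in the bivariate zero-inflated Poisson-lognormal
model: given `(Z_j, Z_k)` bivariate Gaussian and independent `W_j ~ B(πj)`,
`W_k ~ B(πk)`, the counts are conditionally independent with
`Y_j | W, Z ~ W_j δ₀ + (1 - W_j) Poisson(e^{Z_j})`. -/
noncomputable def biZiplnPMF (μj μk σjj σkk σjk πj πk : ℝ) (a b : ℕ) : ℝ :=
  ∫ z : ℝ × ℝ,
    (πj * (if a = 0 then 1 else 0)
        + (1 - πj) * poissonPMFReal (Real.exp z.1).toNNReal a) *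
    (πk * (if b = 0 then 1 else 0)
        + (1 - πk) * poissonPMFReal (Real.exp z.2).toNNReal b)
    ∂(bivariateGaussian μj μk σjj σkk σjk)

/-!
Conditionally on `Z`, the counts `Y_j`, `Y_k` are independent with `E[Y_j | Z] = (1 - π_j) e^{Z_j}`,
so `E[Y_j Y_k] = (1 - π_j)(1 - π_k) E[e^{Z_j + Z_k}]` and `E[Y_j] = (1 - π_j) E[e^{Z_j}]`; the sums
over the counts may be taken under the integral because every term is nonnegative. Writing
`(Z_j, Z_k)` as an affine (Cholesky) image of two independent standard normals, the Gaussian moment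
generating function gives
`E[e^{s Z_j + t Z_k}] = exp(s μ_j + t μ_k + (s² σ_jj + 2 s t σ_jk + t² σ_kk) / 2)`.
-/

open Real

set_option linter.deprecated false

lemma poissonPMFReal_succ_mul (r : ℝ≥0) (n : ℕ) :
    ((n + 1 : ℕ) : ℝ) * poissonPMFReal r (n + 1) = r * poissonPMFReal r n := by
  simp only [poissonPMFReal, Nat.factorial_succ, pow_succ]
  push_cast
  field_simp

lemma hasSum_mul_poissonPMFReal (r : ℝ≥0) :
    HasSum (fun n : ℕ => n * poissonPMFReal r n) r := by
  have hshift : HasSum (fun n : ℕ => ((n + 1 : ℕ) : ℝ) * poissonPMFReal r (n + 1)) r := by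
    simp_rw [poissonPMFReal_succ_mul]
    simpa [poissonPMFReal] using (hasSum_one_poissonMeasure r).mul_left (r : ℝ)
  simpa using (hasSum_nat_add_iff' 1).mp (by simpa using hshift)

noncomputable def ziPoissonPMF (p : ℝ) (r : ℝ≥0) (n : ℕ) : ℝ :=
  p * (if n = 0 then 1 else 0) + (1 - p) * poissonPMFReal r n

section ZIPoisson

variable {p : ℝ} (r : ℝ≥0)

lemma ziPoissonPMF_nonneg (hp : p ∈ Set.Icc (0 : ℝ) 1) (n : ℕ) : 0 ≤ ziPoissonPMF p r n := by
  have : 0 ≤ 1 - p := sub_nonneg.mpr hp.2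
  have := hp.1
  unfold ziPoissonPMF poissonPMFReal
  positivity

lemma hasSum_ziPoissonPMF : HasSum (ziPoissonPMF p r) 1 := by
  convert (hasSum_ite_eq 0 p).add ((hasSum_one_poissonMeasure r).mul_left (1 - p)) using 1
  · ext n
    simp [ziPoissonPMF, poissonPMFReal]
  · ring

lemma hasSum_mul_ziPoissonPMF : HasSum (fun n : ℕ => n * ziPoissonPMF p r n) ((1 - p) * r) := by
  refine ((hasSum_mul_poissonPMFReal r).mul_left (1 - p)).congr_fun fun n => ?_
  rcases eq_or_ne n 0 with rfl | hn
  · simp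
  · simp [ziPoissonPMF, hn]
    ring

end ZIPoisson

lemma measurable_ziPoissonPMF_exp (p : ℝ) (n : ℕ) :
    Measurable fun x : ℝ => ziPoissonPMF p (exp x).toNNReal n := by
  unfold ziPoissonPMF poissonPMFReal
  fun_prop

lemma hasSum_integral_mul_of_nonneg {X Y ι κ : Type*} [MeasurableSpace X] [MeasurableSpace Y]
    [Countable ι] [Countable κ] {ν : Measure (X × Y)} {f : ι → X → ℝ} {g : κ → Y → ℝ}
    {F : X → ℝ} {G : Y → ℝ} (hf₀ : ∀ i x, 0 ≤ f i x) (hg₀ : ∀ k y, 0 ≤ g k y)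
    (hf : ∀ i, Measurable (f i)) (hg : ∀ k, Measurable (g k))
    (hF : ∀ x, HasSum (f · x) (F x)) (hG : ∀ y, HasSum (g · y) (G y))
    (hFG : Integrable (fun z => F z.1 * G z.2) ν) :
    HasSum (fun q : ι × κ => ∫ z, f q.1 z.1 * g q.2 z.2 ∂ν) (∫ z, F z.1 * G z.2 ∂ν) := by
  have hprod (z : X × Y) : HasSum (fun q : ι × κ => f q.1 z.1 * g q.2 z.2) (F z.1 * G z.2) :=
    (hF z.1).mul (hG z.2)
      ((hF z.1).summable.mul_of_nonneg (hG z.2).summable (hf₀ · z.1) (hg₀ · z.2))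
  -- dominated convergence, each summand being its own bound
  refine hasSum_integral_of_dominated_convergence (fun q z => f q.1 z.1 * g q.2 z.2)
    (fun q => ((hf q.1).comp measurable_fst |>.mul
      ((hg q.2).comp measurable_snd)).aestronglyMeasurable)
    (fun q => ae_of_all _ fun z => (Real.norm_of_nonneg (mul_nonneg (hf₀ _ _) (hg₀ _ _))).le)
    (ae_of_all _ fun z => (hprod z).summable) ?_ (ae_of_all _ hprod)
  exact hFG.congr (ae_of_all _ fun z => (hprod z).tsum_eq.symm)

noncomputable def choleskyMap (μj μk σjj σkk σjk : ℝ) (uv : ℝ × ℝ) : ℝ × ℝ :=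
  (μj + √σjj * uv.1, μk + σjk / √σjj * uv.1 + √(σkk - σjk ^ 2 / σjj) * uv.2)

section BivariateGaussian

variable {μj μk σjj σkk σjk : ℝ}

lemma bivariateGaussian_eq_map_choleskyMap :
    bivariateGaussian μj μk σjj σkk σjk =
      ((gaussianReal 0 1).prod (gaussianReal 0 1)).map (choleskyMap μj μk σjj σkk σjk) :=
  rfl

@[fun_prop]
lemma measurable_choleskyMap : Measurable (choleskyMap μj μk σjj σkk σjk) := by
  unfold choleskyMap
  fun_prop

lemma exp_linear_choleskyMap (s t : ℝ) (uv : ℝ × ℝ) :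
    exp (s * (choleskyMap μj μk σjj σkk σjk uv).1 + t * (choleskyMap μj μk σjj σkk σjk uv).2) =
      exp (s * μj + t * μk) * (exp ((s * √σjj + t * σjk / √σjj) * uv.1) *
        exp (t * √(σkk - σjk ^ 2 / σjj) * uv.2)) := by
  rw [← exp_add, ← exp_add, choleskyMap]
  ring_nf

lemma integral_exp_mul_gaussianReal_zero_one (c : ℝ) :
    ∫ x, exp (c * x) ∂(gaussianReal 0 1) = exp (c ^ 2 / 2) := by
  simpa [mgf] using congrFun (mgf_id_gaussianReal (μ := 0) (v := 1)) c

lemma integrable_exp_linear_bivariateGaussian (s t : ℝ) :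
    Integrable (fun z : ℝ × ℝ => exp (s * z.1 + t * z.2))
      (bivariateGaussian μj μk σjj σkk σjk) := by
  rw [bivariateGaussian_eq_map_choleskyMap,
    integrable_map_measure (by fun_prop) measurable_choleskyMap.aemeasurable]
  simp only [Function.comp_def, exp_linear_choleskyMap]
  exact ((integrable_exp_mul_gaussianReal _).mul_prod
    (integrable_exp_mul_gaussianReal _)).const_mul _

lemma integral_exp_linear_bivariateGaussian (hjj : 0 < σjj) (hkk : 0 ≤ σkk - σjk ^ 2 / σjj)
    (s t : ℝ) :
    ∫ z, exp (s * z.1 + t * z.2) ∂(bivariateGaussian μj μk σjj σkk σjk) =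
      exp (s * μj + t * μk + (s ^ 2 * σjj + 2 * s * t * σjk + t ^ 2 * σkk) / 2) := by
  rw [bivariateGaussian_eq_map_choleskyMap, integral_map measurable_choleskyMap.aemeasurable
    (by fun_prop)]
  simp only [exp_linear_choleskyMap]
  rw [integral_const_mul, integral_prod_mul (fun u => exp (_ * u)) (fun v => exp (_ * v)),
    integral_exp_mul_gaussianReal_zero_one, integral_exp_mul_gaussianReal_zero_one,
    ← exp_add, ← exp_add]
  congr 1
  have hsq : √σjj ^ 2 = σjj := sq_sqrt hjj.le
  have hne : √σjj ≠ 0 := (sqrt_pos.mpr hjj).ne'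
  rw [mul_pow t, sq_sqrt hkk]
  field_simp
  rw [hsq]
  ring

end BivariateGaussian

section Model

variable {μj μk σjj σkk σjk πj πk : ℝ}

lemma biZiplnPMF_eq_integral (a b : ℕ) :
    biZiplnPMF μj μk σjj σkk σjk πj πk a b =
      ∫ z, ziPoissonPMF πj (exp z.1).toNNReal a * ziPoissonPMF πk (exp z.2).toNNReal b
        ∂(bivariateGaussian μj μk σjj σkk σjk) :=
  rfl

lemma hasSum_mul_mul_biZiplnPMF (hπj : πj ∈ Set.Icc (0 : ℝ) 1) (hπk : πk ∈ Set.Icc (0 : ℝ) 1)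
    {wa wb : ℕ → ℝ} (hwa : ∀ a, 0 ≤ wa a) (hwb : ∀ b, 0 ≤ wb b) {Fa Fb : ℝ → ℝ}
    (hFa : ∀ x, HasSum (fun a => wa a * ziPoissonPMF πj (exp x).toNNReal a) (Fa x))
    (hFb : ∀ x, HasSum (fun b => wb b * ziPoissonPMF πk (exp x).toNNReal b) (Fb x))
    (hFab : Integrable (fun z : ℝ × ℝ => Fa z.1 * Fb z.2) (bivariateGaussian μj μk σjj σkk σjk)) :
    HasSum (fun q : ℕ × ℕ => wa q.1 * wb q.2 * biZiplnPMF μj μk σjj σkk σjk πj πk q.1 q.2)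
      (∫ z, Fa z.1 * Fb z.2 ∂(bivariateGaussian μj μk σjj σkk σjk)) := by
  refine (hasSum_integral_mul_of_nonneg
    (fun a x => mul_nonneg (hwa a) (ziPoissonPMF_nonneg _ hπj a))
    (fun b x => mul_nonneg (hwb b) (ziPoissonPMF_nonneg _ hπk b))
    (fun a => (measurable_ziPoissonPMF_exp πj a).const_mul _)
    (fun b => (measurable_ziPoissonPMF_exp πk b).const_mul _) hFa hFb hFab).congr_fun fun q => ?_
  rw [biZiplnPMF_eq_integral, ← integral_const_mul]
  congr 1 with z
  ring

lemma hasSum_mul_mul_biZiplnPMF_of_exp (hjj : 0 < σjj) (hkk : 0 ≤ σkk - σjk ^ 2 / σjj)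
    (hπj : πj ∈ Set.Icc (0 : ℝ) 1) (hπk : πk ∈ Set.Icc (0 : ℝ) 1)
    {wa wb : ℕ → ℝ} (hwa : ∀ a, 0 ≤ wa a) (hwb : ∀ b, 0 ≤ wb b) {ca cb s t : ℝ}
    (hFa : ∀ x, HasSum (fun a => wa a * ziPoissonPMF πj (exp x).toNNReal a) (ca * exp (s * x)))
    (hFb : ∀ x, HasSum (fun b => wb b * ziPoissonPMF πk (exp x).toNNReal b) (cb * exp (t * x))) :
    HasSum (fun q : ℕ × ℕ => wa q.1 * wb q.2 * biZiplnPMF μj μk σjj σkk σjk πj πk q.1 q.2)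
      (ca * cb * (exp (s * μj + s ^ 2 * σjj / 2) * exp (t * μk + t ^ 2 * σkk / 2) *
        exp (s * t * σjk))) := by
  have hexp : (fun z : ℝ × ℝ => ca * exp (s * z.1) * (cb * exp (t * z.2))) =
      fun z => ca * cb * exp (s * z.1 + t * z.2) := by
    ext z
    rw [exp_add]
    ring
  have hint : Integrable (fun z : ℝ × ℝ => ca * exp (s * z.1) * (cb * exp (t * z.2)))
      (bivariateGaussian μj μk σjj σkk σjk) :=
    hexp ▸ (integrable_exp_linear_bivariateGaussian s t).const_mul _
  have h := hasSum_mul_mul_biZiplnPMF hπj hπk hwa hwb hFa hFb hint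
  rw [hexp, integral_const_mul, integral_exp_linear_bivariateGaussian hjj hkk] at h
  convert h using 2
  rw [← exp_add, ← exp_add]
  ring_nf

end Model

/-- Covariance in the bivariate zero-inflated Poisson-lognormal model:
`Cov(Y_j, Y_k) = (1-πj)(1-πk) A_j A_k (e^{σjk} - 1)` where
`A_j = exp(μ_j + σ_{jj}/2)` and `A_k = exp(μ_k + σ_{kk}/2)`. -/
theorem bi_zipln_covariance (μj μk σjj σkk σjk πj πk : ℝ)
    (hjj : 0 < σjj) (hkk : 0 ≤ σkk - σjk ^ 2 / σjj)
    (hπj : πj ∈ Set.Icc (0:ℝ) 1) (hπk : πk ∈ Set.Icc (0:ℝ) 1) :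
    let Aj : ℝ := Real.exp (μj + σjj / 2)
    let Ak : ℝ := Real.exp (μk + σkk / 2)
    (∑' q : ℕ × ℕ, (q.1 : ℝ) * (q.2 : ℝ) * biZiplnPMF μj μk σjj σkk σjk πj πk q.1 q.2)
      - (∑' q : ℕ × ℕ, (q.1 : ℝ) * biZiplnPMF μj μk σjj σkk σjk πj πk q.1 q.2)
        * (∑' q : ℕ × ℕ, (q.2 : ℝ) * biZiplnPMF μj μk σjj σkk σjk πj πk q.1 q.2)
      = (1 - πj) * (1 - πk) * Aj * Ak * (Real.exp σjk - 1) := by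
  intro Aj Ak
  have hmean (p x : ℝ) :
      HasSum (fun n : ℕ => n * ziPoissonPMF p (exp x).toNNReal n) ((1 - p) * exp (1 * x)) := by
    simpa [(exp_pos x).le] using hasSum_mul_ziPoissonPMF (p := p) (exp x).toNNReal
  have hmass (p x : ℝ) :
      HasSum (fun n : ℕ => 1 * ziPoissonPMF p (exp x).toNNReal n) (1 * exp (0 * x)) := by
    simpa using hasSum_ziPoissonPMF (p := p) (exp x).toNNReal
  have hcast (n : ℕ) : (0 : ℝ) ≤ n := n.cast_nonneg
  have hone (_ : ℕ) : (0 : ℝ) ≤ 1 := zero_le_one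
  have hjk := hasSum_mul_mul_biZiplnPMF_of_exp (μj := μj) (μk := μk) hjj hkk hπj hπk
    hcast hcast (hmean πj) (hmean πk)
  have hj := hasSum_mul_mul_biZiplnPMF_of_exp (μj := μj) (μk := μk) hjj hkk hπj hπk
    hcast hone (hmean πj) (hmass πk)
  have hk := hasSum_mul_mul_biZiplnPMF_of_exp (μj := μj) (μk := μk) hjj hkk hπj hπk
    hone hcast (hmass πj) (hmean πk)
  simp only [one_mul, mul_one, one_pow, zero_mul, mul_zero, zero_pow two_ne_zero, add_zero,
    zero_div, exp_zero] at hjk hj hk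
  rw [hjk.tsum_eq, hj.tsum_eq, hk.tsum_eq]
  ring
end
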